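/- arXiv:1004.3081 — 3 statements merged into one kernel-verified Lean document; each statement's English description precedes it below -/
import Mathlib

section
/- Symmetry of locality: let F be an infinite free algebra and I the vertex algebra ideal associated to a function N : F × F → ℕ. If x,y ∈ F and M ≥ 0 are such that xₙy ∈ I for all n ≥ M, then also yₙx ∈ I for all n ≥ M. -/
noncomputable section

/-!
Common framework: "infinite free algebras" in the sense of Eller, *Chiral vector bundles*.

An infinite free algebra (completed) is modelled as a topological vector space `F`
over a field `k` of characteristic zero, with a distinguished vector `one` and a
`ℤ`-indexed family of bilinear products `circ n`.  The formal infinite sums provided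
by the completion are interpreted by `tsum` (`∑'`).  An ideal is a subspace closed
under all the products (on both sides) and under convergent (formal) infinite sums.
-/

/-- An infinite free algebra (completed). -/
structure IFA (k F : Type) [Field k] [CharZero k] [AddCommGroup F] [Module k F]
    [TopologicalSpace F] where
  /-- the distinguished vector `1` -/
  one : F
  /-- the products `∘ₙ`; `circ n x y` is `x ∘ₙ y` -/
  circ : ℤ → F → F → F
  circ_add_left : ∀ (n : ℤ) (x x' y : F), circ n (x + x') y = circ n x y + circ n x' y
  circ_add_right : ∀ (n : ℤ) (x y y' : F), circ n x (y + y') = circ n x y + circ n x y'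
  circ_smul_left : ∀ (n : ℤ) (c : k) (x y : F), circ n (c • x) y = c • circ n x y
  circ_smul_right : ∀ (n : ℤ) (c : k) (x y : F), circ n x (c • y) = c • circ n x y

namespace IFA

/-- The binomial coefficient `C(m, K)` for `m : ℤ`, `K : ℕ`, as an element of `k`. -/
def zbinom (k : Type) [Field k] [CharZero k] (m : ℤ) (K : ℕ) : k :=
  (∏ i ∈ Finset.range K, ((m : k) - (i : k))) / (K.factorial : k)

variable {k F : Type} [Field k] [CharZero k] [AddCommGroup F] [Module k F]
  [TopologicalSpace F] (A : IFA k F)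

/-- `D x := x ∘₋₂ 1`. -/
def D (x : F) : F := A.circ (-2) x A.one

/-- identity generators `i⟦x;n⟧ := 1ₙx − δ_{n,−1}x` -/
def geni (x : F) (n : ℤ) : F := A.circ n A.one x - (if n = -1 then x else 0)

/-- derivation generators `d⟦x,y;n⟧ := D(xₙy) − (Dx)ₙy − xₙ(Dy)` -/
def gend (x y : F) (n : ℤ) : F :=
  A.D (A.circ n x y) - A.circ n (A.D x) y - A.circ n x (A.D y)

/-- shift generators `e⟦x,y;n⟧ := (Dx)ₙy + n·x_{n−1}y` -/
def gene (x y : F) (n : ℤ) : F := A.circ n (A.D x) y + (n : k) • A.circ (n - 1) x y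

/-- quasi-commutativity generators
`qc⟦x,y;n⟧ := xₙy + Σ_{K≥0}((−1)^{n+K}/K!)·D^K(y_{n+K}x)` -/
def genqc (x y : F) (n : ℤ) : F :=
  A.circ n x y +
    ∑' K : ℕ, (((-1 : k) ^ (n + (K : ℤ))) * ((K.factorial : k)⁻¹)) •
      (A.D)^[K] (A.circ (n + (K : ℤ)) y x)

/-- quasi-associativity generators
`qa⟦x,y,z;m,n⟧ := (x_my)_nz − Σ_{K≥0} C(m,K)(−1)^K (x_{m−K}(y_{n+K}z) − (−1)^m y_{m+n−K}(x_Kz))` -/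
def genqa (x y z : F) (m n : ℤ) : F :=
  A.circ n (A.circ m x y) z -
    ∑' K : ℕ, ((zbinom k m K) * ((-1 : k) ^ K)) •
      (A.circ (m - (K : ℤ)) x (A.circ (n + (K : ℤ)) y z)
        - ((-1 : k) ^ m) • A.circ (m + n - (K : ℤ)) y (A.circ (K : ℤ) x z))

/-- An ideal of the (completed) infinite free algebra: a subspace closed under all the
products `∘ₙ` by arbitrary elements on both sides, and under the formal (convergent)
infinite sums provided by the completion. -/
def IsIdeal (J : Submodule k F) : Prop :=
  (∀ (n : ℤ) (x y : F), y ∈ J → A.circ n x y ∈ J ∧ A.circ n y x ∈ J) ∧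
    (∀ f : ℕ → F, (∀ i, f i ∈ J) → Summable f → (∑' i, f i) ∈ J)

/-- The ideal generated by a set `S ⊆ F`. -/
def idealGenBy (S : Set F) : Submodule k F := sInf {J | A.IsIdeal J ∧ S ⊆ J}

/-- The generators of the vertex algebra ideal other than the locality generators:
`i⟦x;n⟧, d⟦x,y;n⟧, qc⟦x,y;n⟧` for `n = −1` and all `n ≥ 0`; `qa⟦x,y,z;m,n⟧` for
`m, n ∈ {−1,0,1,2,…}`; and `e⟦x,y;n⟧` for all `n ∈ ℤ`. -/
def baseGens : Set F :=
  {w | ∃ (x : F) (n : ℤ), -1 ≤ n ∧ w = A.geni x n} ∪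
  {w | ∃ (x y : F) (n : ℤ), -1 ≤ n ∧ w = A.gend x y n} ∪
  {w | ∃ (x y : F) (n : ℤ), -1 ≤ n ∧ w = A.genqc x y n} ∪
  {w | ∃ (x y z : F) (m n : ℤ), -1 ≤ m ∧ -1 ≤ n ∧ w = A.genqa x y z m n} ∪
  {w | ∃ (x y : F) (n : ℤ), w = A.gene x y n}

/-- The vertex algebra ideal `I` associated to the locality function `N : F × F → ℕ`:
the ideal generated by the base generators together with the locality elements
`xₙy` for all `x, y ∈ F` and `n ≥ N(x,y)`. -/
def vertexIdeal (N : F → F → ℕ) : Submodule k F :=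
  A.idealGenBy
    (A.baseGens ∪ {w | ∃ (x y : F) (n : ℤ), (N x y : ℤ) ≤ n ∧ w = A.circ n x y})

end IFA

namespace ChiralVB

variable {k F : Type} [Field k] [CharZero k] [AddCommGroup F] [Module k F]
  [TopologicalSpace F]

/-- Symmetry of locality: if `xₙy ∈ I` for all `n ≥ M` (where
`M ≥ 0`), then also `yₙx ∈ I` for all `n ≥ M`. -/
theorem statement7 (A : IFA k F) (hone : A.one ≠ 0) (N : F → F → ℕ)
    (x y : F) (M : ℕ)
    (h : ∀ n : ℤ, (M : ℤ) ≤ n → A.circ n x y ∈ A.vertexIdeal N) :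
    ∀ n : ℤ, (M : ℤ) ≤ n → A.circ n y x ∈ A.vertexIdeal N := by
  intro n hn
  have hn1 : (-1 : ℤ) ≤ n := by have := Int.natCast_nonneg M; omega
  rw [IFA.vertexIdeal, IFA.idealGenBy, Submodule.mem_sInf]
  intro J hJ
  obtain ⟨⟨hJclose, hJsum⟩, hS⟩ := hJ
  have hle : A.vertexIdeal N ≤ J := sInf_le ⟨⟨hJclose, hJsum⟩, hS⟩
  have hqc : A.genqc y x n ∈ J :=
    hS (Or.inl (Or.inl (Or.inl (Or.inr ⟨y, x, n, hn1, rfl⟩))))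
  have hD : ∀ z, z ∈ J → A.D z ∈ J := fun z hz => (hJclose (-2) A.one z hz).2
  have hDK : ∀ (K : ℕ) (z : F), z ∈ J → (A.D)^[K] z ∈ J := by
    intro K
    induction K with
    | zero => intro z hz; simpa using hz
    | succ m ih =>
        intro z hz
        rw [Function.iterate_succ_apply]
        exact ih _ (hD z hz)
  set f : ℕ → F := fun K =>
    (((-1 : k) ^ (n + (K : ℤ))) * ((K.factorial : k)⁻¹)) •
      (A.D)^[K] (A.circ (n + (K : ℤ)) x y) with hf
  have hterm : ∀ K, f K ∈ J := by
    intro K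
    have hxy : A.circ (n + (K : ℤ)) x y ∈ J :=
      hle (h (n + (K : ℤ)) (le_trans hn (by omega)))
    exact Submodule.smul_mem J _ (hDK K _ hxy)
  have htsum : (∑' K, f K) ∈ J := by
    by_cases hs : Summable f
    · exact hJsum f hterm hs
    · rw [tsum_eq_zero_of_not_summable hs]; exact J.zero_mem
  have heq : A.circ n y x = A.genqc y x n - ∑' K, f K := by
    rw [IFA.genqc]; abel
  rw [heq]
  exact sub_mem hqc htsum

end ChiralVB
end
end

section
/- Let s = s(g,a) be a souped-up Lie algebra and V(s) = F(s)/J a vertex algebra where J is a proper ideal containing the souped-up vertex algebra ideal I(s). Then V(s) is an s-module via s·x := s₀x (s ∈ s) and a·x := a₋₁x (a ∈ a); explicitly, for all s,t ∈ s, all a,b ∈ a, and all x ∈ V(s): ([s,t])₀x = s₀(t₀x) − t₀(s₀x) and (ab)₋₁x = a₋₁(b₋₁x). -/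
noncomputable section

/-!
Concrete construction of the (completed) infinite free algebra `F(v)` generated by a
unital vector space `v`: product shapes are binary trees with integer-labelled internal
nodes; the span of the monomials of a fixed shape is the corresponding iterated tensor
power of `v`; and the completion (allowing formal infinite sums of monomials of pairwise
distinct product shapes) is the direct product over all shapes.  Each shape component
carries the discrete topology and `F(v)` the product topology, so that a family is
summable exactly when every shape component receives only finitely many contributions.
-/

/-- Product shapes: full binary rooted trees with an integer at each internal node. -/
inductive Shape : Type
  | leaf : Shape
  | node : ℤ → Shape → Shape → Shape
  deriving DecidableEq

/-- A bundled `k`-vector space. -/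
structure MC (k : Type) [Field k] where
  T : Type
  [grp : AddCommGroup T]
  [mod : Module k T]

attribute [instance] MC.grp MC.mod

variable (k : Type) [Field k] [CharZero k] (V : Type) [AddCommGroup V] [Module k V]

/-- The space spanned by the monomials of a given product shape (bundled). -/
def monData : Shape → MC k
  | .leaf => MC.mk V
  | .node _ l r => MC.mk (TensorProduct k (monData l).T (monData r).T)

/-- The space spanned by the monomials of a given product shape. -/
abbrev MonSp (s : Shape) : Type := (monData k V s).T

instance (s : Shape) : TopologicalSpace (MonSp k V s) := ⊥

/-- The completed infinite free algebra `F(v)` on the (unital) vector space `v = V`. -/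
abbrev FV : Type := ∀ s : Shape, MonSp k V s

/-- The embedding of the generating space `v` into `F(v)` (the length-1 component). -/
def ι (a : V) : FV k V := fun s =>
  match s with
  | .leaf => a
  | .node _ _ _ => 0

/-- The product `x ∘ₙ y` on `F(v)`. -/
def op (n : ℤ) (x y : FV k V) : FV k V := fun s =>
  match s with
  | .leaf => 0
  | .node m l r => if n = m then TensorProduct.tmul k (x l) (y r) else 0

/-- `F(v)` as an infinite free algebra, with distinguished vector the image of the
distinguished vector `e ∈ v`. -/
def freeIFA (e : V) : IFA k (FV k V) where
  one := ι k V e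
  circ := op k V
  circ_add_left := by
    intro n x x' y; funext s
    cases s with
    | leaf => simp [op]
    | node m l r =>
        by_cases h : n = m <;>
          simp [op, h, Pi.add_apply, TensorProduct.add_tmul] <;> rfl
  circ_add_right := by
    intro n x y y'; funext s
    cases s with
    | leaf => simp [op]
    | node m l r =>
        by_cases h : n = m <;>
          simp [op, h, Pi.add_apply, TensorProduct.tmul_add] <;> rfl
  circ_smul_left := by
    intro n c x y; funext s
    cases s with
    | leaf => simp [op]
    | node m l r =>
        by_cases h : n = m
        · simp only [op, h, Pi.smul_apply]
          exact (TensorProduct.smul_tmul' c (x l) (y r)).symm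
        · simp [op, h]
  circ_smul_right := by
    intro n c x y; funext s
    cases s with
    | leaf => simp [op]
    | node m l r =>
        by_cases h : n = m <;>
          simp [op, h, Pi.smul_apply, TensorProduct.tmul_smul] <;> rfl

/-- The vertex algebra ideal `I(v)` of `F(v)`: generated by the base generators
together with the locality elements `uₙv` for `u, v ∈ v` (the generating space) and
`n ≥ N(u,v)`. -/
def genVertexIdeal (e : V) (N : V → V → ℕ) : Submodule k (FV k V) :=
  (freeIFA k V e).idealGenBy
    ((freeIFA k V e).baseGens ∪
      {w | ∃ (a b : V) (n : ℤ), (N a b : ℤ) ≤ n ∧ w = op k V n (ι k V a) (ι k V b)})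
/-!
Souped-up Lie algebras `s = s(g, a)`: an associative commutative unital `k`-algebra `a`
and a `k`-Lie algebra `g` such that `g` is a left `a`-module, `a` is a `g`-module on
which `g` acts by derivations, compatibly.  The underlying unital vector space of the
semidirect sum `s = g ⊕ a` is modelled as `L × A` with distinguished vector `(0, 1)`.
-/

/-- The action data making `(g, a) = (L, A)` a souped-up Lie algebra: `g` acts on `a`
by derivations, the action is a Lie algebra action, and it is compatible with the
`a`-module structure of `g` in that `[g, a·h] = [g,a]·h + a·[g,h]`. -/
structure SoupAct (k A L : Type) [Field k] [CharZero k] [CommRing A] [Algebra k A]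
    [LieRing L] [LieAlgebra k L] [Module A L] [IsScalarTower k A L] where
  act : L →ₗ[k] A →ₗ[k] A
  act_deriv : ∀ (g : L) (a b : A), act g (a * b) = act g a * b + a * act g b
  act_bracket : ∀ (g h : L) (a : A), act ⁅g, h⁆ a = act g (act h a) - act h (act g a)
  act_smul_bracket : ∀ (g : L) (a : A) (h : L), ⁅g, a • h⁆ = act g a • h + a • ⁅g, h⁆

namespace SoupAct

variable {k A L : Type} [Field k] [CharZero k] [CommRing A] [Algebra k A]
  [LieRing L] [LieAlgebra k L] [Module A L] [IsScalarTower k A L]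

/-- The Lie bracket of the semidirect sum Lie algebra `s = g ⊕ a` (`a` abelian):
`[(g,a), (h,b)] = ([g,h], g·b − h·a)`. -/
def sBracket (σ : SoupAct k A L) (p q : L × A) : L × A :=
  (⁅p.1, q.1⁆, σ.act p.1 q.2 - σ.act q.1 p.2)

end SoupAct

/-- Left multiplication by `a ∈ a` on `s = g ⊕ a`. -/
def aMul {A L : Type} [Mul A] [SMul A L] (c : A) (p : L × A) : L × A :=
  (c • p.1, c * p.2)

/-- The distinguished vector `1 = (0, 1)` of `s`. -/
def sOne (A L : Type) [CommRing A] [LieRing L] : L × A := ((0 : L), (1 : A))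

variable (k : Type) [Field k] [CharZero k] (A : Type) [CommRing A] [Algebra k A]
  (L : Type) [LieRing L] [LieAlgebra k L] [Module A L] [IsScalarTower k A L]

/-- The additional generators of the souped-up vertex algebra ideal:
`s⟦s,t⟧ := s₀t − [s,t]`, `a⟦a,s⟧ := a₋₁s − a·s`, and
`am⟦a,b,x⟧ := (ab)₋₁x − a₋₁(b₋₁x)` (the latter being linear in `x`, it is imposed for
all `x ∈ F(s)`, equivalently for all monomials). -/
def soupGens (σ : SoupAct k A L) : Set (FV k (L × A)) :=
  {w | ∃ p q : L × A,
      w = op k (L × A) 0 (ι k (L × A) p) (ι k (L × A) q) - ι k (L × A) (σ.sBracket p q)} ∪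
  {w | ∃ (c : A) (p : L × A),
      w = op k (L × A) (-1) (ι k (L × A) ((0 : L), c)) (ι k (L × A) p)
            - ι k (L × A) (aMul c p)} ∪
  {w | ∃ (c d : A) (x : FV k (L × A)),
      w = op k (L × A) (-1) (ι k (L × A) ((0 : L), c * d)) x
            - op k (L × A) (-1) (ι k (L × A) ((0 : L), c))
                (op k (L × A) (-1) (ι k (L × A) ((0 : L), d)) x)}

/-- The full generating set of the souped-up vertex algebra ideal `I(s)`. -/
def soupGensAll (σ : SoupAct k A L) (N : (L × A) → (L × A) → ℕ) : Set (FV k (L × A)) :=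
  (freeIFA k (L × A) (sOne A L)).baseGens ∪
    {w | ∃ (p q : L × A) (n : ℤ), (N p q : ℤ) ≤ n ∧
        w = op k (L × A) n (ι k (L × A) p) (ι k (L × A) q)} ∪
    soupGens k A L σ

/-- The souped-up vertex algebra ideal `I(s)` associated to the locality function
`N : s × s → ℕ`. -/
def soupIdeal (σ : SoupAct k A L) (N : (L × A) → (L × A) → ℕ) :
    Submodule k (FV k (L × A)) :=
  (freeIFA k (L × A) (sOne A L)).idealGenBy (soupGensAll k A L σ N)

/-!
Since `C(0, K) = 0` for `K > 0`, the quasi-associativity generator `qa⟦x,y,z;0,0⟧` is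
`(x₀y)₀z − (x₀(y₀z) − y₀(x₀z))`. For `p, q ∈ s`, the generator `s⟦p,q⟧` lets us replace
`p₀q` by `[p,q]` in it modulo `J`, which gives the Lie module identity. The associativity
of the `a`-action is one of the generators `am⟦a,b,x⟧`.
-/

namespace IFA

variable {k F : Type} [Field k] [CharZero k] [AddCommGroup F] [Module k F]
  [TopologicalSpace F] (A : IFA k F)

lemma subset_idealGenBy (S : Set F) : S ⊆ A.idealGenBy S :=
  fun _ hx => Submodule.mem_sInf.2 fun _ hJ => hJ.2 hx

lemma circ_sub_left (n : ℤ) (x y z : F) :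
    A.circ n (x - y) z = A.circ n x z - A.circ n y z := by
  rw [sub_eq_add_neg, ← neg_one_smul k y, A.circ_add_left, A.circ_smul_left, neg_one_smul,
    ← sub_eq_add_neg]

lemma zbinom_zero_left {K : ℕ} (hK : K ≠ 0) : zbinom k 0 K = 0 := by
  rw [zbinom, Finset.prod_eq_zero (Finset.mem_range.2 (Nat.pos_of_ne_zero hK)) (by simp),
    zero_div]

lemma genqa_zero_zero (x y z : F) :
    A.genqa x y z 0 0 =
      A.circ 0 (A.circ 0 x y) z - (A.circ 0 x (A.circ 0 y z) - A.circ 0 y (A.circ 0 x z)) := by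
  rw [genqa, tsum_eq_single 0 fun K hK => by rw [zbinom_zero_left hK, zero_mul, zero_smul]]
  norm_num [zbinom]

lemma IsIdeal.circ_zero_sub_commutator_mem {A : IFA k F} {J : Submodule k F}
    (hJ : A.IsIdeal J) {x y w z : F} (hqa : A.genqa x y z 0 0 ∈ J)
    (hw : A.circ 0 x y - w ∈ J) :
    A.circ 0 w z - (A.circ 0 x (A.circ 0 y z) - A.circ 0 y (A.circ 0 x z)) ∈ J := by
  have hwz : A.circ 0 (A.circ 0 x y) z - A.circ 0 w z ∈ J := by
    rw [← circ_sub_left]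
    exact (hJ.1 0 z _ hw).2
  rw [genqa_zero_zero] at hqa
  convert J.sub_mem hqa hwz using 1
  abel

end IFA

section SoupIdeal

variable {k A L} (σ : SoupAct k A L) (N : (L × A) → (L × A) → ℕ)

lemma genqa_mem_soupIdeal (x y z : FV k (L × A)) {m n : ℤ} (hm : -1 ≤ m) (hn : -1 ≤ n) :
    (freeIFA k (L × A) (sOne A L)).genqa x y z m n ∈ soupIdeal k A L σ N :=
  IFA.subset_idealGenBy _ _ <| Or.inl <| Or.inl <| Or.inl <| Or.inr
    ⟨x, y, z, m, n, hm, hn, rfl⟩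

lemma op_zero_sub_sBracket_mem_soupIdeal (p q : L × A) :
    op k (L × A) 0 (ι k (L × A) p) (ι k (L × A) q) - ι k (L × A) (σ.sBracket p q)
      ∈ soupIdeal k A L σ N :=
  IFA.subset_idealGenBy _ _ <| Or.inr <| Or.inl <| Or.inl ⟨p, q, rfl⟩

lemma op_neg_one_mul_sub_mem_soupIdeal (c d : A) (x : FV k (L × A)) :
    op k (L × A) (-1) (ι k (L × A) ((0 : L), c * d)) x -
        op k (L × A) (-1) (ι k (L × A) ((0 : L), c))
          (op k (L × A) (-1) (ι k (L × A) ((0 : L), d)) x)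
      ∈ soupIdeal k A L σ N :=
  IFA.subset_idealGenBy _ _ <| Or.inr <| Or.inr ⟨c, d, x, rfl⟩

end SoupIdeal

theorem statement9_general (k : Type) [Field k] [CharZero k] (A : Type) [CommRing A]
    [Algebra k A] (L : Type) [LieRing L] [LieAlgebra k L] [Module A L]
    [IsScalarTower k A L] (σ : SoupAct k A L) (N : (L × A) → (L × A) → ℕ)
    (J : Submodule k (FV k (L × A)))
    (hJ : (freeIFA k (L × A) (sOne A L)).IsIdeal J)
    (hIJ : soupIdeal k A L σ N ≤ J) :
    (∀ (p q : L × A) (x : FV k (L × A)),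
        op k (L × A) 0 (ι k (L × A) (σ.sBracket p q)) x -
            (op k (L × A) 0 (ι k (L × A) p) (op k (L × A) 0 (ι k (L × A) q) x) -
              op k (L × A) 0 (ι k (L × A) q) (op k (L × A) 0 (ι k (L × A) p) x))
          ∈ J) ∧
    (∀ (c d : A) (x : FV k (L × A)),
        op k (L × A) (-1) (ι k (L × A) ((0 : L), c * d)) x -
            op k (L × A) (-1) (ι k (L × A) ((0 : L), c))
              (op k (L × A) (-1) (ι k (L × A) ((0 : L), d)) x)
          ∈ J) := by
  refine ⟨fun p q x => ?_, fun c d x => hIJ (op_neg_one_mul_sub_mem_soupIdeal σ N c d x)⟩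
  exact hJ.circ_zero_sub_commutator_mem
    (hIJ (genqa_mem_soupIdeal σ N _ _ x (by norm_num) (by norm_num)))
    (hIJ (op_zero_sub_sBracket_mem_soupIdeal σ N p q))

/-- Let `s = s(g,a)` be a souped-up Lie algebra and `V(s) = F(s)/J`
a vertex algebra, `J` a proper ideal containing the souped-up vertex algebra ideal
`I(s)`.  Then `V(s)` is an `s`-module via `s·x := s₀x` and `a·x := a₋₁x`: for all
`s, t ∈ s`, `a, b ∈ a`, `x ∈ V(s)`, `([s,t])₀x = s₀(t₀x) − t₀(s₀x)` and
`(ab)₋₁x = a₋₁(b₋₁x)`. -/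
theorem statement9 (k : Type) [Field k] [CharZero k] (A : Type) [CommRing A]
    [Algebra k A] [Nontrivial A] (L : Type) [LieRing L] [LieAlgebra k L] [Module A L]
    [IsScalarTower k A L] (σ : SoupAct k A L) (N : (L × A) → (L × A) → ℕ)
    (J : Submodule k (FV k (L × A)))
    (hJ : (freeIFA k (L × A) (sOne A L)).IsIdeal J)
    (hIJ : soupIdeal k A L σ N ≤ J) (hproper : J ≠ ⊤) :
    (∀ (p q : L × A) (x : FV k (L × A)),
        op k (L × A) 0 (ι k (L × A) (σ.sBracket p q)) x -
            (op k (L × A) 0 (ι k (L × A) p) (op k (L × A) 0 (ι k (L × A) q) x) -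
              op k (L × A) 0 (ι k (L × A) q) (op k (L × A) 0 (ι k (L × A) p) x))
          ∈ J) ∧
    (∀ (c d : A) (x : FV k (L × A)),
        op k (L × A) (-1) (ι k (L × A) ((0 : L), c * d)) x -
            op k (L × A) (-1) (ι k (L × A) ((0 : L), c))
              (op k (L × A) (-1) (ι k (L × A) ((0 : L), d)) x)
          ∈ J) :=
  statement9_general k A L σ N J hJ hIJ
end
end

section
/- Let M be a finite-dimensional second-countable Hausdorff smooth manifold, E a sheaf of Ω⁰-modules containing Ω⁰ as a subsheaf, U ⊆ M open, T ⊆ U open with closure(T) ⊆ U, σ ∈ Ω⁰(U) with σ ≡ 1 on T, and ρ ∈ Ω⁰(U) with supp(ρ) ⊆ T. Then for every monomial x ∈ F(E(U)) and every n ∈ ℤ, the element ρ ∘ₙ x − ρ ∘ₙ (σ∗x) lies in the supported vertex algebra ideal K(E(U)); equivalently, ρₙx = ρₙ(σ∗x) in the quotient F(E(U))/K(E(U)). Here σ∗x denotes the monomial obtained from x by multiplying every leaf by σ. -/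
noncomputable section

variable (k : Type) [Field k] [CharZero k] (V : Type) [AddCommGroup V] [Module k V]

/-- The shape-component of the map `F(v) → F(v′)` induced by a linear map `φ : v → v′`
(functoriality of tensor powers). -/
def monMap {k : Type} [Field k] [CharZero k]
    {V W : Type} [AddCommGroup V] [Module k V] [AddCommGroup W] [Module k W]
    (φ : V →ₗ[k] W) : ∀ s : Shape, MonSp k V s →ₗ[k] MonSp k W s
  | .leaf => φ
  | .node _ l r => TensorProduct.map (monMap φ l) (monMap φ r)

/-- The map `Φ : F(v) → F(v′)` induced by a linear map `φ : v → v′`; it is determined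
by `Φ(u) = φ(u)` for `u ∈ v` and `Φ(xₙy) = Φ(x)ₙΦ(y)`. -/
def FVmap {k : Type} [Field k] [CharZero k]
    {V W : Type} [AddCommGroup V] [Module k V] [AddCommGroup W] [Module k W]
    (φ : V →ₗ[k] W) (x : FV k V) : FV k W := fun s => monMap φ s (x s)
/-!
Sheaves of `Ω⁰`-modules on a smooth manifold, the support generators, and the
supported vertex algebra ideal `K`.
-/

open scoped Manifold
open TopologicalSpace

/-- Leaf-labelled monomial trees: full binary rooted trees with an integer at each
internal node and an element of `X` at each leaf. -/
inductive LTree (X : Type) : Type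
  | leaf : X → LTree X
  | node : ℤ → LTree X → LTree X → LTree X

/-- The product shape of a monomial tree. -/
def LTree.shape {X : Type} : LTree X → Shape
  | .leaf _ => .leaf
  | .node n l r => .node n l.shape r.shape

/-- The element of the shape component determined by a monomial tree. -/
def tensorOf (k X : Type) [Field k] [CharZero k] [AddCommGroup X] [Module k X] :
    (t : LTree X) → MonSp k X t.shape
  | .leaf a => a
  | .node _ l r => TensorProduct.tmul k (tensorOf k X l) (tensorOf k X r)

/-- The monomial of `F(v)` determined by a monomial tree. -/
def mono (k X : Type) [Field k] [CharZero k] [AddCommGroup X] [Module k X]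
    (t : LTree X) : FV k X :=
  Function.update (0 : FV k X) t.shape (tensorOf k X t)

/-- Apply a map to every leaf of a monomial tree (e.g. multiplication of every leaf by
a fixed smooth function `σ`, giving `σ ∗ x`). -/
def leafMap {X : Type} (g : X → X) : LTree X → LTree X
  | .leaf a => .leaf (g a)
  | .node n l r => .node n (leafMap g l) (leafMap g r)

variable {E0 : Type} [NormedAddCommGroup E0] [NormedSpace ℝ E0] [FiniteDimensional ℝ E0]
  {H : Type} [TopologicalSpace H] (IM : ModelWithCorners ℝ E0 H)
  (M : Type) [TopologicalSpace M] [ChartedSpace H M] [IsManifold IM (⊤ : ℕ∞) M]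
  [SecondCountableTopology M] [T2Space M]

/-- The ring `Ω⁰(U)` of smooth real-valued functions on an open subset `U` of `M`. -/
abbrev SmoothFn (U : Opens M) : Type := ContMDiffMap IM (𝓘(ℝ, ℝ)) U ℝ (⊤ : ℕ∞)

/-- Restriction of smooth functions along an inclusion of open sets. -/
def fres {U V : Opens M} (h : V ≤ U) (f : SmoothFn IM M U) : SmoothFn IM M V :=
  ⟨fun x => f (Opens.inclusion h x), f.contMDiff.comp (contMDiff_inclusion h)⟩

/-- A sheaf `E` of `Ω⁰`-modules on `M` containing `Ω⁰` as a subsheaf.  Each `E(U)` is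
a real vector space, a module over the smooth functions `Ω⁰(U)`, with compatible
restriction maps satisfying the sheaf axioms, and with a compatible injection of
`Ω⁰(U)` into `E(U)`; the distinguished vector `1 ∈ E(U)` is the image of the constant
function `1`. -/
structure OmegaModSheaf where
  sec : Opens M → Type
  [grp : ∀ U, AddCommGroup (sec U)]
  [mod : ∀ U, Module ℝ (sec U)]
  /-- the action of `Ω⁰(U)` on `E(U)` -/
  fsmul : ∀ (U : Opens M), SmoothFn IM M U → sec U →ₗ[ℝ] sec U
  fsmul_one : ∀ (U : Opens M) (s : sec U), fsmul U 1 s = s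
  fsmul_mul : ∀ (U : Opens M) (f g : SmoothFn IM M U) (s : sec U),
    fsmul U (f * g) s = fsmul U f (fsmul U g s)
  fsmul_add : ∀ (U : Opens M) (f g : SmoothFn IM M U) (s : sec U),
    fsmul U (f + g) s = fsmul U f s + fsmul U g s
  /-- the restriction maps of `E` -/
  res : ∀ {U V : Opens M}, V ≤ U → sec U →ₗ[ℝ] sec V
  res_self : ∀ (U : Opens M) (s : sec U), res (le_refl U) s = s
  res_res : ∀ {U V W : Opens M} (hWV : W ≤ V) (hVU : V ≤ U) (s : sec U),
    res hWV (res hVU s) = res (hWV.trans hVU) s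
  res_fsmul : ∀ {U V : Opens M} (h : V ≤ U) (f : SmoothFn IM M U) (s : sec U),
    res h (fsmul U f s) = fsmul V (fres IM M h f) (res h s)
  /-- the inclusion of `Ω⁰` into `E` -/
  emb : ∀ U : Opens M, SmoothFn IM M U →ₗ[ℝ] sec U
  emb_inj : ∀ U : Opens M, Function.Injective (emb U)
  emb_res : ∀ {U V : Opens M} (h : V ≤ U) (f : SmoothFn IM M U),
    res h (emb U f) = emb V (fres IM M h f)
  emb_fsmul : ∀ (U : Opens M) (f g : SmoothFn IM M U),
    fsmul U f (emb U g) = emb U (f * g)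
  /-- sheaf axiom: locality/uniqueness for `E` -/
  locality : ∀ {U : Opens M} {idx : Type} (W : idx → Opens M) (hW : ∀ i, W i ≤ U),
    (U : Set M) ⊆ (⋃ i, (W i : Set M)) →
      ∀ s : sec U, (∀ i, res (hW i) s = 0) → s = 0
  /-- sheaf axiom: gluing/existence for `E` -/
  glue : ∀ {U : Opens M} {idx : Type} (W : idx → Opens M) (hW : ∀ i, W i ≤ U),
    (U : Set M) ⊆ (⋃ i, (W i : Set M)) →
      ∀ sf : ∀ i, sec (W i),
        (∀ i j, res (inf_le_left : W i ⊓ W j ≤ W i) (sf i) =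
          res (inf_le_right : W i ⊓ W j ≤ W j) (sf j)) →
        ∃ s : sec U, ∀ i, res (hW i) s = sf i

attribute [instance] OmegaModSheaf.grp OmegaModSheaf.mod

namespace OmegaModSheaf

variable {IM} {M} (e : OmegaModSheaf IM M)

/-- The support of a section `s ∈ E(U)`: the complement in `U` of the union of all
open `W ≤ U` on which `s` restricts to `0`. -/
def suppOf {U : Opens M} (s : e.sec U) : Set M :=
  {x | x ∈ (U : Set M) ∧
    ∀ (W : Opens M) (h : W ≤ U), e.res h s = 0 → x ∉ (W : Set M)}

/-- The common support of a monomial, defined recursively by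
`supp(xₙy) = closure (interior (supp x) ∩ interior (supp y))`. -/
def suppT {U : Opens M} : LTree (e.sec U) → Set M
  | .leaf a => e.suppOf a
  | .node _ l r => closure (interior (suppT l) ∩ interior (suppT r))

/-- `F(E(U))`, as an infinite free algebra with distinguished vector the image of the
constant function `1`. -/
def sheafIFA (U : Opens M) : IFA ℝ (FV ℝ (e.sec U)) :=
  freeIFA ℝ (e.sec U) (e.emb U 1)

/-- The generators of the (plain) vertex algebra ideal `I(E(U))`, with constant
locality function `N ≡ N₀` imposed on the generating subspace `E(U)`. -/
def iGens (U : Opens M) (N₀ : ℕ) : Set (FV ℝ (e.sec U)) :=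
  (e.sheafIFA U).baseGens ∪
    {w | ∃ (a b : e.sec U) (n : ℤ), (N₀ : ℤ) ≤ n ∧
      w = op ℝ (e.sec U) n (ι ℝ (e.sec U) a) (ι ℝ (e.sec U) b)}

/-- The vertex algebra ideal `I(E(U))`. -/
def iIdeal (U : Opens M) (N₀ : ℕ) : Submodule ℝ (FV ℝ (e.sec U)) :=
  (e.sheafIFA U).idealGenBy (e.iGens U N₀)

/-- The supported vertex algebra ideal `K(E(U))`: generated by `I(E(U))` together with
the common-support generators `x − π(x)`, i.e. the composite monomials whose common
support is empty. -/
def kIdeal (U : Opens M) (N₀ : ℕ) : Submodule ℝ (FV ℝ (e.sec U)) :=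
  (e.sheafIFA U).idealGenBy
    (e.iGens U N₀ ∪
      {w | ∃ t : LTree (e.sec U), (∃ n l r, t = .node n l r) ∧ e.suppT t = ∅ ∧
        w = mono ℝ (e.sec U) t})

end OmegaModSheaf

/-!
Since `σ = 1` on `T`, each leaf difference `a − σa` restricts to `0` on `T`. Telescoping
`x₁ₘx₂ − (σ∗x₁)ₘ(σ∗x₂) = (x₁ − σ∗x₁)ₘx₂ + (σ∗x₁)ₘ(x₂ − σ∗x₂)` down the tree writes
`x − σ∗x` as a linear combination of monomials whose common support misses `T`. Since `ρ` is
supported in `T`, `ρ` times any such monomial has empty common support, so it is one of the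
generators `x − π(x) = x` of `K`.
-/

section FreeAlgebra

open Submodule

variable {k : Type} [Field k] {V : Type} [AddCommGroup V] [Module k V]

lemma ι_sub (a b : V) : ι k V (a - b) = ι k V a - ι k V b := by
  funext s
  cases s
  · rfl
  · exact (sub_zero 0).symm

variable [CharZero k]

/-- The bilinearity axioms of `freeIFA` do not involve its unit, so any unit will do. -/
def opBilin (n : ℤ) : FV k V →ₗ[k] FV k V →ₗ[k] FV k V :=
  LinearMap.mk₂ k (op k V n) ((freeIFA k V 0).circ_add_left n)
    ((freeIFA k V 0).circ_smul_left n) ((freeIFA k V 0).circ_add_right n)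
    ((freeIFA k V 0).circ_smul_right n)

@[simp]
lemma opBilin_apply (n : ℤ) (x y : FV k V) : opBilin n x y = op k V n x y := rfl

lemma mono_apply_shape (t : LTree V) : mono k V t t.shape = tensorOf k V t :=
  Function.update_self _ _ _

lemma mono_apply_of_ne {t : LTree V} {s : Shape} (h : s ≠ t.shape) : mono k V t s = 0 :=
  Function.update_of_ne h _ _

lemma mono_leaf (a : V) : mono k V (.leaf a) = ι k V a := by
  funext s
  cases s with
  | leaf => exact mono_apply_shape (.leaf a)
  | node => exact mono_apply_of_ne (by simp [LTree.shape])

lemma mono_node (n : ℤ) (l r : LTree V) :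
    mono k V (.node n l r) = op k V n (mono k V l) (mono k V r) := by
  funext s
  rcases s with _ | ⟨m, sl, sr⟩
  · exact mono_apply_of_ne (by simp [LTree.shape])
  show _ = if n = m then mono k V l sl ⊗ₜ[k] mono k V r sr else 0
  by_cases hs : Shape.node m sl sr = (LTree.node n l r).shape
  · obtain ⟨rfl, rfl, rfl⟩ : m = n ∧ sl = l.shape ∧ sr = r.shape := by
      simpa [LTree.shape, eq_comm] using hs
    rw [if_pos rfl, mono_apply_shape, mono_apply_shape]
    exact mono_apply_shape (.node m l r)
  · rw [mono_apply_of_ne hs]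
    split_ifs with hm
    · subst hm
      by_cases hl : sl = l.shape
      · rw [mono_apply_of_ne (t := r) (by rintro rfl; simp [LTree.shape, hl] at hs),
          TensorProduct.tmul_zero]
        rfl
      · rw [mono_apply_of_ne hl, TensorProduct.zero_tmul]
        rfl
    · rfl

lemma op_mem_span_mono_of_left {P : Set (LTree V)} (m : ℤ) (r : LTree V)
    (hP : ∀ l ∈ P, LTree.node m l r ∈ P) {z : FV k V} (hz : z ∈ span k (mono k V '' P)) :
    op k V m z (mono k V r) ∈ span k (mono k V '' P) := by
  have hle : span k (mono k V '' P) ≤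
      (span k (mono k V '' P)).comap ((opBilin m).flip (mono k V r)) := by
    rw [span_le]
    rintro _ ⟨l, hl, rfl⟩
    exact subset_span ⟨_, hP l hl, mono_node m l r⟩
  exact hle hz

lemma op_mem_span_mono_of_right {P : Set (LTree V)} (m : ℤ) (l : LTree V)
    (hP : ∀ r ∈ P, LTree.node m l r ∈ P) {z : FV k V} (hz : z ∈ span k (mono k V '' P)) :
    op k V m (mono k V l) z ∈ span k (mono k V '' P) := by
  have hle : span k (mono k V '' P) ≤
      (span k (mono k V '' P)).comap (opBilin m (mono k V l)) := by
    rw [span_le]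
    rintro _ ⟨r, hr, rfl⟩
    exact subset_span ⟨_, hP r hr, mono_node m l r⟩
  exact hle hz

lemma mono_sub_mono_leafMap_mem_span (g : V → V) {P : Set (LTree V)}
    (hleaf : ∀ a, LTree.leaf (a - g a) ∈ P)
    (hleft : ∀ m l r, l ∈ P → LTree.node m l r ∈ P)
    (hright : ∀ m l r, r ∈ P → LTree.node m l r ∈ P) (t : LTree V) :
    mono k V t - mono k V (leafMap g t) ∈ span k (mono k V '' P) := by
  induction t with
  | leaf a =>
    rw [leafMap, mono_leaf, mono_leaf, ← ι_sub, ← mono_leaf]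
    exact subset_span ⟨_, hleaf a, rfl⟩
  | node m l r ihl ihr =>
    have htelescope : mono k V (.node m l r) - mono k V (leafMap g (.node m l r)) =
        op k V m (mono k V l - mono k V (leafMap g l)) (mono k V r) +
          op k V m (mono k V (leafMap g l)) (mono k V r - mono k V (leafMap g r)) := by
      simp only [leafMap, mono_node, ← opBilin_apply, map_sub, LinearMap.sub_apply]
      abel
    rw [htelescope]
    exact add_mem (op_mem_span_mono_of_left m r (fun l => hleft m l r) ihl)
      (op_mem_span_mono_of_right m _ (hright m _) ihr)

end FreeAlgebra

namespace OmegaModSheaf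

open Submodule

variable {E0 : Type} [NormedAddCommGroup E0] [NormedSpace ℝ E0] {H : Type} [TopologicalSpace H]
  {IM : ModelWithCorners ℝ E0 H} {M : Type} [TopologicalSpace M] [ChartedSpace H M]
  (e : OmegaModSheaf IM M)

lemma suppOf_subset_compl_of_res_eq_zero {U W : Opens M} (h : W ≤ U) {s : e.sec U}
    (hs : e.res h s = 0) : e.suppOf s ⊆ (W : Set M)ᶜ :=
  fun _ hx => hx.2 W h hs

lemma suppOf_sub_fsmul_subset_compl {U T : Opens M} (hTU : T ≤ U) {σ : SmoothFn IM M U}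
    (hσ : ∀ x : U, (x : M) ∈ (T : Set M) → σ x = 1) (a : e.sec U) :
    e.suppOf (a - e.fsmul U σ a) ⊆ (T : Set M)ᶜ := by
  have hσT : fres IM M hTU σ = 1 := by
    ext y
    exact hσ (Opens.inclusion hTU y) y.2
  refine e.suppOf_subset_compl_of_res_eq_zero hTU ?_
  rw [map_sub, e.res_fsmul, hσT, e.fsmul_one, sub_self]

lemma suppOf_emb_subset_tsupport {U : Opens M} (ρ : SmoothFn IM M U) :
    e.suppOf (e.emb U ρ) ⊆ Subtype.val '' tsupport ρ := by
  let W : Opens M :=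
    ⟨_, U.isOpen.isOpenEmbedding_subtypeVal.isOpenMap _ (isClosed_tsupport ρ).isOpen_compl⟩
  have hWU : W ≤ U := by
    rintro _ ⟨y, -, rfl⟩
    exact y.2
  have hρW : fres IM M hWU ρ = 0 := by
    ext ⟨_, y, hy, rfl⟩
    show ρ y = 0
    exact image_eq_zero_of_notMem_tsupport hy
  intro x hx
  by_contra hxρ
  have hxW : x ∈ (W : Set M) := ⟨⟨x, hx.1⟩, fun h => hxρ ⟨_, h, rfl⟩, rfl⟩
  refine e.suppOf_subset_compl_of_res_eq_zero hWU ?_ hx hxW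
  rw [e.emb_res, hρW, map_zero]

lemma suppT_node_subset_of_left {U : Opens M} {C : Set M} (hC : IsClosed C) (m : ℤ)
    {l : LTree (e.sec U)} (r : LTree (e.sec U)) (hl : e.suppT l ⊆ C) :
    e.suppT (.node m l r) ⊆ C :=
  closure_minimal (fun _ hx => hl (interior_subset hx.1)) hC

lemma suppT_node_subset_of_right {U : Opens M} {C : Set M} (hC : IsClosed C) (m : ℤ)
    (l : LTree (e.sec U)) {r : LTree (e.sec U)} (hr : e.suppT r ⊆ C) :
    e.suppT (.node m l r) ⊆ C :=
  closure_minimal (fun _ hx => hr (interior_subset hx.2)) hC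

lemma suppT_node_eq_empty_of_disjoint {U : Opens M} (m : ℤ) {l r : LTree (e.sec U)}
    (h : Disjoint (e.suppT l) (e.suppT r)) : e.suppT (.node m l r) = ∅ := by
  rw [suppT, (h.mono interior_subset interior_subset).inter_eq, closure_empty]

lemma mono_mem_kIdeal_of_suppT_eq_empty {U : Opens M} (N₀ : ℕ) (m : ℤ)
    (l r : LTree (e.sec U)) (h : e.suppT (.node m l r) = ∅) :
    mono ℝ (e.sec U) (.node m l r) ∈ e.kIdeal U N₀ :=
  mem_sInf.mpr fun _ hJ => hJ.2 (Or.inr ⟨_, ⟨m, l, r, rfl⟩, h, rfl⟩)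

lemma op_mem_kIdeal_of_mem_span {U : Opens M} (N₀ : ℕ) {C : Set M} {s : e.sec U}
    (hs : Disjoint (e.suppOf s) C) (n : ℤ) {w : FV ℝ (e.sec U)}
    (hw : w ∈ span ℝ (mono ℝ (e.sec U) '' {u | e.suppT u ⊆ C})) :
    op ℝ (e.sec U) n (ι ℝ (e.sec U) s) w ∈ e.kIdeal U N₀ := by
  have hle : span ℝ (mono ℝ (e.sec U) '' {u | e.suppT u ⊆ C}) ≤
      (e.kIdeal U N₀).comap (opBilin n (ι ℝ (e.sec U) s)) := by
    rw [span_le]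
    rintro _ ⟨u, hu, rfl⟩
    have := e.mono_mem_kIdeal_of_suppT_eq_empty N₀ n (.leaf s) u
      (e.suppT_node_eq_empty_of_disjoint n (hs.mono_right hu))
    rwa [mono_node, mono_leaf] at this
  exact hle hw

end OmegaModSheaf

open TopologicalSpace in
theorem statement18_general {E0 : Type} [NormedAddCommGroup E0] [NormedSpace ℝ E0]
    {H : Type} [TopologicalSpace H] (IM : ModelWithCorners ℝ E0 H)
    (M : Type) [TopologicalSpace M] [ChartedSpace H M]
    (e : OmegaModSheaf IM M) (U : Opens M) (N₀ : ℕ) (T : Opens M) (hTU : T ≤ U)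
    (σ : SmoothFn IM M U) (hσ : ∀ x : U, (x : M) ∈ (T : Set M) → σ x = 1)
    (ρ : SmoothFn IM M U)
    (hρ : tsupport (⇑ρ) ⊆ (fun x : U => (x : M)) ⁻¹' (T : Set M)) :
    ∀ (t : LTree (e.sec U)) (n : ℤ),
      op ℝ (e.sec U) n (ι ℝ (e.sec U) (e.emb U ρ)) (mono ℝ (e.sec U) t) -
          op ℝ (e.sec U) n (ι ℝ (e.sec U) (e.emb U ρ))
            (mono ℝ (e.sec U) (leafMap (fun a => e.fsmul U σ a) t))
        ∈ e.kIdeal U N₀ := by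
  intro t n
  have hTc : IsClosed (T : Set M)ᶜ := T.isOpen.isClosed_compl
  have hρT : e.suppOf (e.emb U ρ) ⊆ T :=
    (e.suppOf_emb_subset_tsupport ρ).trans (Set.image_subset_iff.mpr hρ)
  have hdiff := mono_sub_mono_leafMap_mem_span (k := ℝ) (fun a => e.fsmul U σ a)
    (P := {u | e.suppT u ⊆ (T : Set M)ᶜ})
    (e.suppOf_sub_fsmul_subset_compl hTU hσ)
    (fun m _ r => e.suppT_node_subset_of_left hTc m r)
    (fun m l _ => e.suppT_node_subset_of_right hTc m l) t
  rw [← opBilin_apply, ← opBilin_apply, ← map_sub]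
  exact e.op_mem_kIdeal_of_mem_span N₀ (disjoint_compl_right.mono_left hρT) n hdiff

open TopologicalSpace in
/-- With `T`, `σ` as in the bump function lemma and
`ρ ∈ Ω⁰(U)` supported in `T`, for every monomial `x ∈ F(E(U))` and every
`n ∈ ℤ`, the element `ρ ∘ₙ x − ρ ∘ₙ (σ∗x)` lies in the supported vertex algebra
ideal `K(E(U))`; equivalently `ρₙx = ρₙ(σ∗x)` in `F(E(U))/K(E(U))`. -/
theorem statement18 {E0 : Type} [NormedAddCommGroup E0] [NormedSpace ℝ E0] [FiniteDimensional ℝ E0]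
    {H : Type} [TopologicalSpace H] (IM : ModelWithCorners ℝ E0 H)
    (M : Type) [TopologicalSpace M] [ChartedSpace H M] [IsManifold IM (⊤ : ℕ∞) M]
    [SecondCountableTopology M] [T2Space M]
    (e : OmegaModSheaf IM M) (U : Opens M) (N₀ : ℕ) (T : Opens M) (hTU : T ≤ U)
    (hT : closure (T : Set M) ⊆ (U : Set M))
    (σ : SmoothFn IM M U) (hσ : ∀ x : U, (x : M) ∈ (T : Set M) → σ x = 1)
    (ρ : SmoothFn IM M U)
    (hρ : tsupport (⇑ρ) ⊆ (fun x : U => (x : M)) ⁻¹' (T : Set M)) :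
    ∀ (t : LTree (e.sec U)) (n : ℤ),
      op ℝ (e.sec U) n (ι ℝ (e.sec U) (e.emb U ρ)) (mono ℝ (e.sec U) t) -
          op ℝ (e.sec U) n (ι ℝ (e.sec U) (e.emb U ρ))
            (mono ℝ (e.sec U) (leafMap (fun a => e.fsmul U σ a) t))
        ∈ e.kIdeal U N₀ :=
  statement18_general IM M e U N₀ T hTU σ hσ ρ hρ
end
end
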